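/- arXiv:math/0504074 — 2 statements merged into one kernel-verified Lean document; each statement's English description precedes it below -/
import Mathlib

section
/- Let F be a field of characteristic zero and let q ∈ F be a primitive n-th root of unity for some integer n ≥ 1 (i.e., q^n = 1 and q^k ≠ 1 for 0 < k < n). Then an element f of the quantum plane O_q(F²) is central if and only if f lies in the F-linear span of the monomials x^i·y^j with n dividing i and n dividing j. -/
/-!
The monomials `x^i y^j` form a basis of `O_q(F²)`: they span because `y x = q x y` lets every
word be reordered, and they are linearly independent because `x` and `y` act on `F^(ℕ × ℕ)` by
`e_{a,b} ↦ e_{a+1,b}` and `e_{a,b} ↦ q^a e_{a,b+1}`, sending `e_{0,0}` under `x^i y^j` to the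
distinct vectors `e_{i,j}`. If `f = ∑ c_{ij} x^i y^j`, the coefficients of `f x - x f` and
`y f - f y` at `x^(i+1) y^j` and `x^i y^(j+1)` are `(q^j - 1) c_{ij}` and `(q^i - 1) c_{ij}`.
Hence `f` is central iff `q^i = q^j = 1` whenever `c_{ij} ≠ 0`, i.e. iff `n ∣ i` and `n ∣ j`.
-/

noncomputable section

/-- The defining relation of the quantum plane: `y * x = q • (x * y)`. -/
inductive QRel (F : Type) [Field F] (q : F) :
    FreeAlgebra F (Fin 2) → FreeAlgebra F (Fin 2) → Prop
  | rel : QRel F q (FreeAlgebra.ι F 1 * FreeAlgebra.ι F 0)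
      (q • (FreeAlgebra.ι F 0 * FreeAlgebra.ι F 1))

/-- The quantum plane `O_q(F²)`. -/
abbrev QPlane (F : Type) [Field F] (q : F) : Type := RingQuot (QRel F q)

/-- The generator `x` of the quantum plane. -/
def Qx (F : Type) [Field F] (q : F) : QPlane F q :=
  RingQuot.mkAlgHom F (QRel F q) (FreeAlgebra.ι F 0)

/-- The generator `y` of the quantum plane. -/
def Qy (F : Type) [Field F] (q : F) : QPlane F q :=
  RingQuot.mkAlgHom F (QRel F q) (FreeAlgebra.ι F 1)

theorem mul_pow_eq_smul_of_mul_eq_smul {R A : Type*} [CommSemiring R] [Semiring A] [Algebra R A]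
    {a b : A} {c : R} (h : b * a = c • (a * b)) (k : ℕ) : b * a ^ k = c ^ k • (a ^ k * b) := by
  induction k with
  | zero => simp
  | succ k ih =>
    rw [pow_succ, ← mul_assoc, ih, smul_mul_assoc, mul_assoc, h, mul_smul_comm, smul_smul,
      ← pow_succ, ← mul_assoc]

theorem pow_mul_pow_eq_smul_of_mul_eq_smul {R A : Type*} [CommSemiring R] [Semiring A]
    [Algebra R A] {a b : A} {c : R} (h : b * a = c • (a * b)) (j k : ℕ) :
    b ^ j * a ^ k = c ^ (j * k) • (a ^ k * b ^ j) := by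
  induction j with
  | zero => simp
  | succ j ih =>
    rw [pow_succ, mul_assoc, mul_pow_eq_smul_of_mul_eq_smul h, mul_smul_comm, ← mul_assoc, ih,
      smul_mul_assoc, smul_smul, ← pow_add, mul_assoc, ← pow_succ, add_one_mul, add_comm]

theorem Module.Basis.repr_apply_map_of_apply_eq_smul {ι R M : Type*} [CommSemiring R]
    [AddCommMonoid M] [Module R M] (b : Module.Basis ι R M) (T : M →ₗ[R] M) {σ : ι → ι}
    (hσ : σ.Injective) (w : ι → R) (hT : ∀ i, T (b i) = w i • b (σ i)) (m : M) (i : ι) :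
    b.repr (T m) (σ i) = w i * b.repr m i := by
  classical
  have : Finsupp.lapply (σ i) ∘ₗ b.repr.toLinearMap ∘ₗ T =
      w i • (Finsupp.lapply i ∘ₗ b.repr.toLinearMap) := by
    refine b.ext fun j => ?_
    by_cases hj : j = i
    · subst hj; simp [hT]
    · simp [hT, hσ.eq_iff, hj]
  simpa using LinearMap.congr_fun this m

namespace QPlane

variable {F : Type} [Field F] {q : F}

theorem Qy_mul_Qx : Qy F q * Qx F q = q • (Qx F q * Qy F q) := by
  rw [Qx, Qy, ← map_mul, ← map_mul, ← map_smul]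
  exact RingQuot.mkAlgHom_rel F QRel.rel

theorem monomial_mul_monomial (i j k l : ℕ) :
    (Qx F q ^ i * Qy F q ^ j) * (Qx F q ^ k * Qy F q ^ l) =
      q ^ (j * k) • (Qx F q ^ (i + k) * Qy F q ^ (j + l)) := by
  rw [mul_assoc, ← mul_assoc (Qy F q ^ j), pow_mul_pow_eq_smul_of_mul_eq_smul Qy_mul_Qx,
    smul_mul_assoc, mul_smul_comm, pow_add, pow_add, mul_assoc, mul_assoc]

theorem adjoin_Qx_Qy : Algebra.adjoin F {Qx F q, Qy F q} = ⊤ := by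
  have : ({Qx F q, Qy F q} : Set (QPlane F q)) =
      RingQuot.mkAlgHom F (QRel F q) '' Set.range (FreeAlgebra.ι F) := by
    ext z
    simp [Fin.exists_fin_two, Qx, Qy, eq_comm]
  rw [this, Algebra.adjoin_image, FreeAlgebra.adjoin_range_ι, Algebra.map_top,
    AlgHom.range_eq_top]
  exact RingQuot.mkAlgHom_surjective F _

theorem mem_of_Qx_mem_of_Qy_mem {S : Subalgebra F (QPlane F q)} (hx : Qx F q ∈ S)
    (hy : Qy F q ∈ S) (g : QPlane F q) : g ∈ S := by
  have hle := Algebra.adjoin_le (Set.insert_subset_iff.2 ⟨hx, Set.singleton_subset_iff.2 hy⟩)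
  rw [adjoin_Qx_Qy, top_le_iff] at hle
  exact hle ▸ Algebra.mem_top

theorem commute_of_commute_Qx_Qy {f : QPlane F q} (hx : Commute f (Qx F q))
    (hy : Commute f (Qy F q)) (g : QPlane F q) : Commute f g :=
  (Subalgebra.mem_centralizer_iff F).1 (mem_of_Qx_mem_of_Qy_mem (S := .centralizer F {f})
    ((Subalgebra.mem_centralizer_iff F).2 fun _ h => h ▸ hx)
    ((Subalgebra.mem_centralizer_iff F).2 fun _ h => h ▸ hy) g) f rfl

theorem span_monomial_eq_top :
    Submodule.span F (Set.range fun p : ℕ × ℕ => Qx F q ^ p.1 * Qy F q ^ p.2) = ⊤ := by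
  set S := Submodule.span F (Set.range fun p : ℕ × ℕ => Qx F q ^ p.1 * Qy F q ^ p.2)
  have hmul : S * S ≤ S := by
    rw [Submodule.span_mul_span, Submodule.span_le]
    rintro _ ⟨_, ⟨p, rfl⟩, _, ⟨r, rfl⟩, rfl⟩
    dsimp only
    rw [monomial_mul_monomial]
    exact S.smul_mem _ (Submodule.subset_span ⟨(p.1 + r.1, p.2 + r.2), rfl⟩)
  have hone : (1 : QPlane F q) ∈ S := Submodule.subset_span ⟨(0, 0), by simp⟩
  exact eq_top_iff.2 fun z _ => mem_of_Qx_mem_of_Qy_mem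
    (S := S.toSubalgebra hone fun _ _ ha hb => hmul (Submodule.mul_mem_mul ha hb))
    (Submodule.subset_span ⟨(1, 0), by simp⟩) (Submodule.subset_span ⟨(0, 1), by simp⟩) z

variable (F) in
def shiftX : Module.End F ((ℕ × ℕ) →₀ F) :=
  Finsupp.lmapDomain F F (Prod.map (· + 1) id)

variable (q) in
def shiftY : Module.End F ((ℕ × ℕ) →₀ F) :=
  Finsupp.linearCombination F fun p : ℕ × ℕ => Finsupp.single (p.1, p.2 + 1) (q ^ p.1)

theorem shiftX_single (p : ℕ × ℕ) (c : F) :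
    shiftX F (Finsupp.single p c) = Finsupp.single (p.1 + 1, p.2) c := by
  rw [shiftX, Finsupp.lmapDomain_apply, Finsupp.mapDomain_single]
  rfl

theorem shiftY_single (p : ℕ × ℕ) (c : F) :
    shiftY q (Finsupp.single p c) = Finsupp.single (p.1, p.2 + 1) (c * q ^ p.1) := by
  rw [shiftY, Finsupp.linearCombination_single, Finsupp.smul_single']

theorem shiftY_mul_shiftX : shiftY q * shiftX F = q • (shiftX F * shiftY q) := by
  refine Finsupp.lhom_ext fun p c => ?_
  simp only [LinearMap.smul_apply, Module.End.mul_apply, shiftX_single, shiftY_single,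
    Finsupp.smul_single', pow_succ]
  ring_nf

variable (q) in
def regularRep : QPlane F q →ₐ[F] Module.End F ((ℕ × ℕ) →₀ F) :=
  RingQuot.liftAlgHom F ⟨FreeAlgebra.lift F ![shiftX F, shiftY q], by
    rintro _ _ ⟨⟩
    simpa using shiftY_mul_shiftX⟩

theorem regularRep_Qx : regularRep q (Qx F q) = shiftX F := by
  simp [regularRep, Qx]

theorem regularRep_Qy : regularRep q (Qy F q) = shiftY q := by
  simp [regularRep, Qy]

theorem regularRep_monomial_single (i j : ℕ) :
    regularRep q (Qx F q ^ i * Qy F q ^ j) (Finsupp.single (0, 0) 1) =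
      Finsupp.single (i, j) 1 := by
  have hX : ∀ (i : ℕ) (p : ℕ × ℕ), (shiftX F ^ i) (Finsupp.single p 1) =
      Finsupp.single (p.1 + i, p.2) 1 := by
    intro i
    induction i with
    | zero => simp
    | succ i ih => intro p; rw [pow_succ', Module.End.mul_apply, ih, shiftX_single, add_assoc]
  have hY : ∀ j : ℕ, (shiftY q ^ j) (Finsupp.single (0, 0) 1) = Finsupp.single (0, j) 1 := by
    intro j
    induction j with
    | zero => simp
    | succ j ih => rw [pow_succ', Module.End.mul_apply, ih, shiftY_single]; simp
  rw [map_mul, map_pow, map_pow, regularRep_Qx, regularRep_Qy, Module.End.mul_apply, hY, hX,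
    zero_add]

theorem linearIndependent_monomial :
    LinearIndependent F fun p : ℕ × ℕ => Qx F q ^ p.1 * Qy F q ^ p.2 := by
  refine LinearIndependent.of_comp
    (LinearMap.applyₗ (Finsupp.single (0, 0) 1) ∘ₗ (regularRep q).toLinearMap) ?_
  convert Finsupp.linearIndependent_single_one F (ℕ × ℕ) with p
  exact regularRep_monomial_single p.1 p.2

variable (F q) in
def monomialBasis : Module.Basis (ℕ × ℕ) F (QPlane F q) :=
  .mk linearIndependent_monomial span_monomial_eq_top.ge

theorem monomialBasis_apply (p : ℕ × ℕ) : monomialBasis F q p = Qx F q ^ p.1 * Qy F q ^ p.2 :=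
  Module.Basis.mk_apply _ _ _

theorem monomial_mul_Qx (i j : ℕ) :
    Qx F q ^ i * Qy F q ^ j * Qx F q = q ^ j • (Qx F q ^ (i + 1) * Qy F q ^ j) := by
  simpa using monomial_mul_monomial (q := q) i j 1 0

theorem Qx_mul_monomial (i j : ℕ) :
    Qx F q * (Qx F q ^ i * Qy F q ^ j) = Qx F q ^ (i + 1) * Qy F q ^ j := by
  rw [← mul_assoc, pow_succ']

theorem monomial_mul_Qy (i j : ℕ) :
    Qx F q ^ i * Qy F q ^ j * Qy F q = Qx F q ^ i * Qy F q ^ (j + 1) := by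
  rw [mul_assoc, pow_succ]

theorem Qy_mul_monomial (i j : ℕ) :
    Qy F q * (Qx F q ^ i * Qy F q ^ j) = q ^ i • (Qx F q ^ i * Qy F q ^ (j + 1)) := by
  simpa [add_comm] using monomial_mul_monomial (q := q) 0 1 i j

theorem monomial_mem_center {i j : ℕ} (hi : q ^ i = 1) (hj : q ^ j = 1) :
    Qx F q ^ i * Qy F q ^ j ∈ Subalgebra.center F (QPlane F q) := by
  rw [Subalgebra.mem_center_iff]
  intro g
  refine (commute_of_commute_Qx_Qy ?_ ?_ g).symm
  · rw [Commute, SemiconjBy, monomial_mul_Qx, Qx_mul_monomial, hj, one_smul]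
  · rw [Commute, SemiconjBy, monomial_mul_Qy, Qy_mul_monomial, hi, one_smul]

theorem monomialBasis_repr_commutator_Qx (f : QPlane F q) (p : ℕ × ℕ) :
    (monomialBasis F q).repr (f * Qx F q - Qx F q * f) (p.1 + 1, p.2) =
      (q ^ p.2 - 1) * (monomialBasis F q).repr f p :=
  (monomialBasis F q).repr_apply_map_of_apply_eq_smul
    (LinearMap.mulRight F (Qx F q) - LinearMap.mulLeft F (Qx F q))
    (σ := Prod.map (· + 1) id) ((add_left_injective 1).prodMap Function.injective_id)
    (fun p => q ^ p.2 - 1)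
    (fun p => by simp [monomialBasis_apply, monomial_mul_Qx, Qx_mul_monomial, sub_smul]) f p

theorem monomialBasis_repr_commutator_Qy (f : QPlane F q) (p : ℕ × ℕ) :
    (monomialBasis F q).repr (Qy F q * f - f * Qy F q) (p.1, p.2 + 1) =
      (q ^ p.1 - 1) * (monomialBasis F q).repr f p :=
  (monomialBasis F q).repr_apply_map_of_apply_eq_smul
    (LinearMap.mulLeft F (Qy F q) - LinearMap.mulRight F (Qy F q))
    (σ := Prod.map id (· + 1)) (Function.injective_id.prodMap (add_left_injective 1))
    (fun p => q ^ p.1 - 1)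
    (fun p => by simp [monomialBasis_apply, monomial_mul_Qy, Qy_mul_monomial, sub_smul]) f p

theorem pow_eq_one_of_monomialBasis_repr_ne_zero {f : QPlane F q} (hf : ∀ g, f * g = g * f) {p : ℕ × ℕ}
    (hp : (monomialBasis F q).repr f p ≠ 0) : q ^ p.1 = 1 ∧ q ^ p.2 = 1 := by
  have hx := monomialBasis_repr_commutator_Qx f p
  have hy := monomialBasis_repr_commutator_Qy f p
  rw [hf, sub_self, map_zero, Finsupp.zero_apply, eq_comm, mul_eq_zero, sub_eq_zero] at hx
  rw [hf, sub_self, map_zero, Finsupp.zero_apply, eq_comm, mul_eq_zero, sub_eq_zero] at hy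
  exact ⟨hy.resolve_right hp, hx.resolve_right hp⟩

theorem central_iff_mem_span_monomial (f : QPlane F q) :
    (∀ g, f * g = g * f) ↔ f ∈ Submodule.span F
      {m | ∃ i j : ℕ, q ^ i = 1 ∧ q ^ j = 1 ∧ m = Qx F q ^ i * Qy F q ^ j} := by
  constructor
  · intro hf
    have : {m | ∃ i j : ℕ, q ^ i = 1 ∧ q ^ j = 1 ∧ m = Qx F q ^ i * Qy F q ^ j} =
        monomialBasis F q '' {p | q ^ p.1 = 1 ∧ q ^ p.2 = 1} := by
      ext m
      simp [monomialBasis_apply, eq_comm, and_assoc]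
    rw [this, Module.Basis.mem_span_image]
    exact fun p hp => pow_eq_one_of_monomialBasis_repr_ne_zero hf (Finsupp.mem_support_iff.1 hp)
  · intro hf
    have hle : Submodule.span F
        {m | ∃ i j : ℕ, q ^ i = 1 ∧ q ^ j = 1 ∧ m = Qx F q ^ i * Qy F q ^ j} ≤
        Subalgebra.toSubmodule (Subalgebra.center F (QPlane F q)) := by
      rw [Submodule.span_le]
      rintro _ ⟨i, j, hi, hj, rfl⟩
      exact monomial_mem_center hi hj
    exact fun g => ((Subalgebra.mem_center_iff (R := F)).1 (hle hf) g).symm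

end QPlane

theorem stmt_6_general (F : Type) [Field F] (q : F) (n : ℕ) (hn : 1 ≤ n)
    (hqn : q ^ n = 1) (hprim : ∀ k : ℕ, 0 < k → k < n → q ^ k ≠ 1)
    (f : QPlane F q) :
    (∀ g : QPlane F q, f * g = g * f) ↔
      f ∈ Submodule.span F
        {m : QPlane F q | ∃ i j : ℕ, n ∣ i ∧ n ∣ j ∧ m = Qx F q ^ i * Qy F q ^ j} := by
  have hq : IsPrimitiveRoot q n := .mk_of_lt q hn hqn hprim
  simpa only [hq.pow_eq_one_iff_dvd] using QPlane.central_iff_mem_span_monomial f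

theorem stmt_6 (F : Type) [Field F] [CharZero F] (q : F) (n : ℕ) (hn : 1 ≤ n)
    (hqn : q ^ n = 1) (hprim : ∀ k : ℕ, 0 < k → k < n → q ^ k ≠ 1)
    (f : QPlane F q) :
    (∀ g : QPlane F q, f * g = g * f) ↔
      f ∈ Submodule.span F
        {m : QPlane F q | ∃ i j : ℕ, n ∣ i ∧ n ∣ j ∧ m = Qx F q ^ i * Qy F q ^ j} :=
  stmt_6_general F q n hn hqn hprim f
end
end

section
/- Let F be a field of characteristic zero and let q ∈ F be a primitive n-th root of unity for some integer n ≥ 1 (i.e., q^n = 1 and q^k ≠ 1 for 0 < k < n). If p is a nonconstant prime element of the quantum plane O_q(F²), then either p is both central and irreducible, or p is a scalar multiple of x or a scalar multiple of y. -/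
/-!
The monomials `x^i y^j` form a basis of `O_q(F²)`, and for `q ≠ 0` the product of the leading
terms of `f` and `g` (for the order by total degree, then by degree in `x`) survives in `f * g`.
So `O_q(F²)` is a domain with additive total degree: a prime is not reducible, and a divisor of an
element of the same degree is a scalar multiple of it.

Moving `x` to the left twists an element by the diagonal map `σ : x^a y^b ↦ q^b x^a y^b`, that is
`p x = x σ(p)`. A prime `p` therefore divides `x` or `σ(p)`. In the first case `p` is a multiple
of `x`; in the second `σ(p) = c p`, and either `c = 1`, so `p` commutes with `x`, or every monomial
of `p` contains `y`, so `p = g y` with `g` constant by primality. Arguing in the same way with `y`,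
a prime which is not a multiple of `x` or `y` commutes with both generators, hence is central.
-/

noncomputable section

/-- `r` divides `s` if `s = r·t` or `s = t·r` for some `t`. -/
def EltDvd {R : Type} [Ring R] (r s : R) : Prop :=
  ∃ t : R, s = r * t ∨ s = t * r

/-- `r` is prime if `r ∣ s·t` implies `r ∣ s` or `r ∣ t`. -/
def IsPrimeElt {R : Type} [Ring R] (r : R) : Prop :=
  ∀ s t : R, EltDvd r (s * t) → EltDvd r s ∨ EltDvd r t

/-- An element of the quantum plane is constant if it is in the image of the
structure map `F → O_q(F²)`. -/
def IsConstQP (F : Type) [Field F] (q : F) (f : QPlane F q) : Prop :=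
  f ∈ Set.range (algebraMap F (QPlane F q))

/-- A (nonzero) element is reducible if it is a product of two nonconstant elements. -/
def IsReducibleQP (F : Type) [Field F] (q : F) (f : QPlane F q) : Prop :=
  ∃ g h : QPlane F q, ¬ IsConstQP F q g ∧ ¬ IsConstQP F q h ∧ f = g * h

/-- An element is irreducible if it is nonconstant and not reducible. -/
def IsIrreducibleQP (F : Type) [Field F] (q : F) (f : QPlane F q) : Prop :=
  ¬ IsConstQP F q f ∧ ¬ IsReducibleQP F q f

/-- An element is central if it commutes with everything. -/
def IsCentralElt {R : Type} [Ring R] (r : R) : Prop :=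
  ∀ s : R, r * s = s * r

namespace QuantumPlane

variable {F : Type} [Field F] {q : F}

theorem y_mul_x : Qy F q * Qx F q = q • (Qx F q * Qy F q) := by
  simpa [Qx, Qy] using RingQuot.mkAlgHom_rel F (QRel.rel (F := F) (q := q))

theorem y_mul_x_pow (k : ℕ) : Qy F q * Qx F q ^ k = q ^ k • (Qx F q ^ k * Qy F q) := by
  induction k with
  | zero => simp
  | succ k ih =>
    rw [pow_succ, ← mul_assoc, ih, smul_mul_assoc, mul_assoc, y_mul_x, mul_smul_comm,
      ← mul_assoc, smul_smul, ← pow_succ]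

theorem y_pow_mul_x_pow (j k : ℕ) :
    Qy F q ^ j * Qx F q ^ k = q ^ (j * k) • (Qx F q ^ k * Qy F q ^ j) := by
  induction j with
  | zero => simp
  | succ j ih =>
    rw [pow_succ, mul_assoc, y_mul_x_pow, mul_smul_comm, ← mul_assoc, ih, smul_mul_assoc,
      smul_smul, mul_assoc, ← pow_succ, ← pow_add, add_one_mul, add_comm]

variable (q) in
def monomial (m : ℕ × ℕ) : QPlane F q := Qx F q ^ m.1 * Qy F q ^ m.2

theorem monomial_mul_monomial (m m' : ℕ × ℕ) :
    monomial q m * monomial q m' = q ^ (m.2 * m'.1) • monomial q (m + m') := by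
  simp only [monomial, Prod.fst_add, Prod.snd_add, pow_add]
  rw [mul_assoc, ← mul_assoc (Qy F q ^ m.2), y_pow_mul_x_pow]
  simp only [smul_mul_assoc, mul_smul_comm, mul_assoc]

theorem monomial_zero : monomial q 0 = (1 : QPlane F q) := by
  simp [monomial]

theorem monomial_one_zero : monomial q (1, 0) = Qx F q := by
  simp [monomial]

theorem monomial_zero_one : monomial q (0, 1) = Qy F q := by
  simp [monomial]

def shiftX : ((ℕ × ℕ) →₀ F) →ₗ[F] (ℕ × ℕ) →₀ F :=
  Finsupp.lmapDomain F F fun m => m + (1, 0)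

variable (q) in
def twistedShiftY : ((ℕ × ℕ) →₀ F) →ₗ[F] (ℕ × ℕ) →₀ F :=
  Finsupp.lsum F fun m => q ^ m.1 • Finsupp.lsingle (m + (0, 1))

theorem shiftX_single (m : ℕ × ℕ) (c : F) :
    shiftX (Finsupp.single m c) = Finsupp.single (m + (1, 0)) c := by
  simp [shiftX]

theorem twistedShiftY_single (m : ℕ × ℕ) (c : F) :
    twistedShiftY q (Finsupp.single m c) = Finsupp.single (m + (0, 1)) (q ^ m.1 * c) := by
  simp [twistedShiftY]

theorem twistedShiftY_mul_shiftX :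
    twistedShiftY q * shiftX =
      q • (shiftX * twistedShiftY q : Module.End F ((ℕ × ℕ) →₀ F)) := by
  refine Finsupp.lhom_ext fun m c => ?_
  simp only [Module.End.mul_apply, LinearMap.smul_apply, shiftX_single, twistedShiftY_single,
    Finsupp.smul_single, smul_eq_mul, Prod.fst_add, pow_succ]
  ring_nf

variable (q) in
def coeffAction : QPlane F q →ₐ[F] Module.End F ((ℕ × ℕ) →₀ F) :=
  RingQuot.liftAlgHom F ⟨FreeAlgebra.lift F ![shiftX, twistedShiftY q], by
    rintro _ _ ⟨⟩
    simpa using twistedShiftY_mul_shiftX⟩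

theorem coeffAction_monomial (m : ℕ × ℕ) :
    coeffAction q (monomial q m) (Finsupp.single 0 1) = Finsupp.single m 1 := by
  have hx : coeffAction q (Qx F q) = shiftX := by simp [coeffAction, Qx]
  have hy : coeffAction q (Qy F q) = twistedShiftY q := by simp [coeffAction, Qy]
  obtain ⟨i, j⟩ := m
  simp only [monomial, map_mul, map_pow, hx, hy, Module.End.mul_apply]
  have hyj : (twistedShiftY q ^ j) (Finsupp.single 0 1) = Finsupp.single (0, j) 1 := by
    induction j with
    | zero => rfl
    | succ j ih => rw [pow_succ', Module.End.mul_apply, ih, twistedShiftY_single]; simp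
  have hxi : (shiftX ^ i) (Finsupp.single (0, j) 1) = Finsupp.single (i, j) (1 : F) := by
    induction i with
    | zero => rfl
    | succ i ih => rw [pow_succ', Module.End.mul_apply, ih, shiftX_single]; simp
  rw [hyj, hxi]

theorem linearIndependent_monomial : LinearIndependent F (monomial (F := F) q) :=
  LinearIndependent.of_comp ((coeffAction q).toLinearMap.flip (Finsupp.single 0 1)) <| by
    convert Finsupp.linearIndependent_single_one F (ℕ × ℕ) with m
    exact coeffAction_monomial m

theorem adjoin_x_y : Algebra.adjoin F {Qx F q, Qy F q} = ⊤ := by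
  have hxy : {Qx F q, Qy F q} = RingQuot.mkAlgHom F (QRel F q) '' Set.range (FreeAlgebra.ι F) := by
    rw [← Set.range_comp]
    ext
    simp [Qx, Qy, Fin.exists_fin_two, eq_comm]
  rw [hxy, Algebra.adjoin_image, FreeAlgebra.adjoin_range_ι, Algebra.map_top,
    AlgHom.range_eq_top]
  exact RingQuot.mkAlgHom_surjective F _

theorem span_monomial : Submodule.span F (Set.range (monomial q)) = ⊤ := by
  set S := Submodule.span F (Set.range (monomial (F := F) q))
  have hmul : S * S ≤ S := by
    rw [Submodule.span_mul_span, Submodule.span_le]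
    rintro _ ⟨_, ⟨m, rfl⟩, _, ⟨m', rfl⟩, rfl⟩
    simp only [monomial_mul_monomial]
    exact S.smul_mem _ (Submodule.subset_span ⟨_, rfl⟩)
  rw [eq_top_iff]
  rintro f -
  have hf : f ∈ Algebra.adjoin F {Qx F q, Qy F q} := adjoin_x_y (q := q) ▸ Algebra.mem_top
  induction hf using Algebra.adjoin_induction with
  | mem a ha =>
    rcases ha with rfl | rfl
    · exact Submodule.subset_span ⟨(1, 0), monomial_one_zero⟩
    · exact Submodule.subset_span ⟨(0, 1), monomial_zero_one⟩
  | algebraMap c =>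
    rw [Algebra.algebraMap_eq_smul_one, ← monomial_zero]
    exact S.smul_mem _ (Submodule.subset_span ⟨_, rfl⟩)
  | add a b _ _ ha hb => exact S.add_mem ha hb
  | mul a b _ _ ha hb => exact hmul (Submodule.mul_mem_mul ha hb)

variable (q) in
def monomialBasis : Module.Basis (ℕ × ℕ) F (QPlane F q) :=
  Module.Basis.mk linearIndependent_monomial span_monomial.ge

theorem monomialBasis_apply (m : ℕ × ℕ) : monomialBasis q m = monomial (F := F) q m :=
  Module.Basis.mk_apply _ _ _

local notation "coeff" => Module.Basis.repr (monomialBasis q)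

theorem coeff_monomial (m : ℕ × ℕ) : coeff (monomial q m) = Finsupp.single m (1 : F) := by
  rw [← monomialBasis_apply, Module.Basis.repr_self]

theorem coeff_mul_apply (f g : QPlane F q) (m : ℕ × ℕ) :
    coeff (f * g) m = ∑ ab ∈ (coeff f).support ×ˢ (coeff g).support,
      if ab.1 + ab.2 = m then coeff f ab.1 * coeff g ab.2 * q ^ (ab.1.2 * ab.2.1) else 0 := by
  rw [← LinearMap.mul_apply' (R := F) f g, ← LinearMap.sum_repr_mul_repr_mul (monomialBasis q)
    (monomialBasis q)]
  simp +contextual [Finsupp.sum, Finset.sum_product, monomialBasis_apply, monomial_mul_monomial,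
    coeff_monomial, Finsupp.single_apply, smul_smul, mul_comm, mul_left_comm]

theorem coeff_algebraMap (c : F) :
    coeff (algebraMap F (QPlane F q) c) = Finsupp.single 0 c := by
  rw [Algebra.algebraMap_eq_smul_one, ← monomial_zero, map_smul, coeff_monomial,
    Finsupp.smul_single, smul_eq_mul, mul_one]

theorem mem_of_forall_monomial_mem {N : Submodule F (QPlane F q)} {f : QPlane F q}
    (h : ∀ m ∈ (coeff f).support, monomial q m ∈ N) : f ∈ N := by
  refine Submodule.span_le.mpr ?_ ((monomialBasis q).mem_span_repr_support f)
  rintro _ ⟨m, hm, rfl⟩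
  rw [monomialBasis_apply]
  exact h m hm

variable (q) in
def totalDegree (f : QPlane F q) : ℕ := (coeff f).support.sup fun m => m.1 + m.2

theorem le_totalDegree {f : QPlane F q} {m : ℕ × ℕ} (hm : m ∈ (coeff f).support) :
    m.1 + m.2 ≤ totalDegree q f :=
  Finset.le_sup (f := fun m : ℕ × ℕ => m.1 + m.2) hm

theorem totalDegree_eq_zero_iff {f : QPlane F q} :
    totalDegree q f = 0 ↔ (coeff f).support ⊆ {0} := by
  rw [totalDegree, ← Nat.le_zero, Finset.sup_le_iff, Finset.subset_singleton_iff']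
  exact forall₂_congr fun m _ => by rw [Prod.ext_iff]; simp

theorem totalDegree_monomial (m : ℕ × ℕ) : totalDegree q (monomial q m) = m.1 + m.2 := by
  simp [totalDegree, coeff_monomial]

theorem isConstQP_iff_totalDegree_eq_zero {f : QPlane F q} :
    IsConstQP F q f ↔ totalDegree q f = 0 := by
  rw [totalDegree_eq_zero_iff, Finsupp.support_subset_singleton]
  constructor
  · rintro ⟨c, rfl⟩
    simp [coeff_algebraMap]
  · intro h
    exact ⟨coeff f 0, (monomialBasis q).repr.injective (by rw [coeff_algebraMap, ← h])⟩

theorem ne_zero_of_not_isConstQP {f : QPlane F q} (h : ¬ IsConstQP F q f) : f ≠ 0 := by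
  rintro rfl
  exact h ⟨0, map_zero _⟩

theorem eq_of_add_eq_of_degLex_le {a b A B : ℕ × ℕ}
    (ha : toLex (a.1 + a.2, a.1) ≤ toLex (A.1 + A.2, A.1))
    (hb : toLex (b.1 + b.2, b.1) ≤ toLex (B.1 + B.2, B.1)) (h : a + b = A + B) :
    a = A ∧ b = B := by
  simp only [Prod.Lex.toLex_le_toLex, Prod.ext_iff, Prod.fst_add, Prod.snd_add] at *
  omega

/-- The product of the leading terms for the order by total degree, then by degree in `x`, is
a nonzero term of `f * g`: no other pair of terms contributes to its monomial. -/
theorem totalDegree_add_le_totalDegree_mul (hq : q ≠ 0) {f g : QPlane F q} (hf : f ≠ 0)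
    (hg : g ≠ 0) : totalDegree q f + totalDegree q g ≤ totalDegree q (f * g) := by
  let key : ℕ × ℕ → Lex (ℕ × ℕ) := fun m => toLex (m.1 + m.2, m.1)
  obtain ⟨A, hA, hAmax⟩ := (coeff f).support.exists_max_image key (by simpa using hf)
  obtain ⟨B, hB, hBmax⟩ := (coeff g).support.exists_max_image key (by simpa using hg)
  have hdeg : ∀ {h : QPlane F q} {C : ℕ × ℕ},
      (∀ c ∈ (coeff h).support, key c ≤ key C) → totalDegree q h ≤ C.1 + C.2 := fun hC =>
    Finset.sup_le fun c hc => by have := Prod.Lex.toLex_le_toLex.mp (hC c hc); omega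
  have hcoeff : coeff (f * g) (A + B) = coeff f A * coeff g B * q ^ (A.2 * B.1) := by
    rw [coeff_mul_apply, Finset.sum_eq_single_of_mem (A, B) (Finset.mem_product.mpr ⟨hA, hB⟩)]
    · simp
    · rintro ⟨a, b⟩ hab hne
      rw [Finset.mem_product] at hab
      refine if_neg fun h => hne ?_
      obtain ⟨rfl, rfl⟩ := eq_of_add_eq_of_degLex_le (hAmax a hab.1) (hBmax b hab.2) h
      rfl
  have hmem : A + B ∈ (coeff (f * g)).support := by
    rw [Finsupp.mem_support_iff, hcoeff]
    exact mul_ne_zero (mul_ne_zero (Finsupp.mem_support_iff.mp hA)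
      (Finsupp.mem_support_iff.mp hB)) (pow_ne_zero _ hq)
  calc totalDegree q f + totalDegree q g ≤ (A.1 + A.2) + (B.1 + B.2) :=
        add_le_add (hdeg hAmax) (hdeg hBmax)
    _ = (A + B).1 + (A + B).2 := by simp only [Prod.fst_add, Prod.snd_add]; ring
    _ ≤ totalDegree q (f * g) := le_totalDegree hmem

theorem exists_totalDegree_add_le_of_eltDvd (hq : q ≠ 0) {p w : QPlane F q} (hw : w ≠ 0)
    (h : EltDvd p w) :
    ∃ t, totalDegree q p + totalDegree q t ≤ totalDegree q w ∧ (w = p * t ∨ w = t * p) := by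
  obtain ⟨t, ht⟩ := h
  have hp : p ≠ 0 := by rintro rfl; simp_all
  have ht0 : t ≠ 0 := by rintro rfl; simp_all
  refine ⟨t, ?_, ht⟩
  rcases ht with rfl | rfl
  · exact totalDegree_add_le_totalDegree_mul hq hp ht0
  · exact add_comm (totalDegree q p) _ ▸ totalDegree_add_le_totalDegree_mul hq ht0 hp

theorem totalDegree_le_of_eltDvd (hq : q ≠ 0) {p w : QPlane F q} (hw : w ≠ 0)
    (h : EltDvd p w) : totalDegree q p ≤ totalDegree q w := by
  obtain ⟨t, ht, -⟩ := exists_totalDegree_add_le_of_eltDvd hq hw h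
  omega

theorem exists_eq_smul_of_eltDvd (hq : q ≠ 0) {p w : QPlane F q} (hw : w ≠ 0)
    (h : EltDvd p w) (hdeg : totalDegree q w ≤ totalDegree q p) : ∃ c : F, w = c • p := by
  obtain ⟨t, ht, hwt⟩ := exists_totalDegree_add_le_of_eltDvd hq hw h
  obtain ⟨c, rfl⟩ := isConstQP_iff_totalDegree_eq_zero.mpr (by omega : totalDegree q t = 0)
  refine ⟨c, ?_⟩
  rcases hwt with rfl | rfl
  · rw [← Algebra.commutes, Algebra.smul_def]
  · rw [Algebra.smul_def]

theorem not_isReducibleQP_of_isPrimeElt (hq : q ≠ 0) {p : QPlane F q} (hp : IsPrimeElt p) :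
    ¬ IsReducibleQP F q p := by
  rintro ⟨g, h, hg, hh, rfl⟩
  have hg0 := ne_zero_of_not_isConstQP hg
  have hh0 := ne_zero_of_not_isConstQP hh
  have hdeg := totalDegree_add_le_totalDegree_mul hq hg0 hh0
  have hg1 := isConstQP_iff_totalDegree_eq_zero.not.mp hg
  have hh1 := isConstQP_iff_totalDegree_eq_zero.not.mp hh
  rcases hp g h ⟨1, Or.inl (mul_one _).symm⟩ with hd | hd
  · have := totalDegree_le_of_eltDvd hq hg0 hd
    omega
  · have := totalDegree_le_of_eltDvd hq hh0 hd
    omega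

theorem exists_eq_smul_of_isPrimeElt (hq : q ≠ 0) {p g h : QPlane F q} (hp : IsPrimeElt p)
    (hh : ¬ IsConstQP F q h) (hgh : p = g * h ∨ p = h * g) : ∃ c : F, p = c • h := by
  have hg : IsConstQP F q g := by
    by_contra hg
    refine not_isReducibleQP_of_isPrimeElt hq hp ?_
    rcases hgh with rfl | rfl
    exacts [⟨g, h, hg, hh, rfl⟩, ⟨h, g, hh, hg, rfl⟩]
  obtain ⟨c, rfl⟩ := hg
  refine ⟨c, ?_⟩
  rcases hgh with rfl | rfl
  · rw [Algebra.smul_def]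
  · rw [← Algebra.commutes, Algebra.smul_def]

variable (q) in
def scaleCoeffs (w : ℕ × ℕ → F) : QPlane F q →ₗ[F] QPlane F q :=
  (monomialBasis q).constr F fun m => w m • monomial q m

theorem scaleCoeffs_monomial (w : ℕ × ℕ → F) (m : ℕ × ℕ) :
    scaleCoeffs q w (monomial q m) = w m • monomial q m := by
  rw [← monomialBasis_apply, scaleCoeffs, Module.Basis.constr_basis, monomialBasis_apply]

theorem coeff_scaleCoeffs (w : ℕ × ℕ → F) (f : QPlane F q) (m : ℕ × ℕ) :
    coeff (scaleCoeffs q w f) m = w m * coeff f m := by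
  have : Finsupp.lapply m ∘ₗ (monomialBasis q).repr.toLinearMap ∘ₗ scaleCoeffs q w =
      w m • Finsupp.lapply m ∘ₗ (monomialBasis q).repr.toLinearMap :=
    (monomialBasis q).ext fun m' => by
      by_cases h : m' = m <;> simp [monomialBasis_apply, scaleCoeffs_monomial, coeff_monomial, h]
  exact LinearMap.congr_fun this f

theorem support_coeff_scaleCoeffs {w : ℕ × ℕ → F} (hw : ∀ m, w m ≠ 0) (f : QPlane F q) :
    (coeff (scaleCoeffs q w f)).support = (coeff f).support := by
  ext m
  simp [coeff_scaleCoeffs, hw]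

theorem mul_x_eq (f : QPlane F q) :
    f * Qx F q = Qx F q * scaleCoeffs q (fun m => q ^ m.2) f := by
  have : LinearMap.mulRight F (Qx F q) =
      LinearMap.mulLeft F (Qx F q) ∘ₗ scaleCoeffs q (fun m => q ^ m.2) :=
    (monomialBasis q).ext fun m => by
      simp [monomialBasis_apply, scaleCoeffs_monomial, ← monomial_one_zero, monomial_mul_monomial,
        add_comm]
  exact LinearMap.congr_fun this f

theorem mul_y_eq (hq : q ≠ 0) (f : QPlane F q) :
    f * Qy F q = Qy F q * scaleCoeffs q (fun m => (q ^ m.1)⁻¹) f := by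
  have : LinearMap.mulRight F (Qy F q) =
      LinearMap.mulLeft F (Qy F q) ∘ₗ scaleCoeffs q (fun m => (q ^ m.1)⁻¹) :=
    (monomialBasis q).ext fun m => by
      simp [monomialBasis_apply, scaleCoeffs_monomial, ← monomial_zero_one, monomial_mul_monomial,
        add_comm, smul_smul, hq]
  exact LinearMap.congr_fun this f

theorem eq_of_scaleCoeffs_eq_smul {w : ℕ × ℕ → F} {p : QPlane F q} {c : F}
    (h : scaleCoeffs q w p = c • p) {m : ℕ × ℕ} (hm : m ∈ (coeff p).support) :
    w m = c := by
  have := congrArg (coeff · m) h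
  simp only [coeff_scaleCoeffs, map_smul, Finsupp.smul_apply, smul_eq_mul] at this
  exact mul_right_cancel₀ (Finsupp.mem_support_iff.mp hm) this

theorem totalDegree_x : totalDegree q (Qx F q) = 1 := by
  rw [← monomial_one_zero, totalDegree_monomial]
  rfl

theorem totalDegree_y : totalDegree q (Qy F q) = 1 := by
  rw [← monomial_zero_one, totalDegree_monomial]
  rfl

theorem not_isConstQP_x : ¬ IsConstQP F q (Qx F q) := by
  simp [isConstQP_iff_totalDegree_eq_zero, totalDegree_x]

theorem not_isConstQP_y : ¬ IsConstQP F q (Qy F q) := by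
  simp [isConstQP_iff_totalDegree_eq_zero, totalDegree_y]

theorem eq_smul_or_scaleCoeffs_eq_smul (hq : q ≠ 0) {w : ℕ × ℕ → F} (hw : ∀ m, w m ≠ 0)
    {z p : QPlane F q} (hz : totalDegree q z = 1) (hp : IsPrimeElt p)
    (hnc : ¬ IsConstQP F q p) (hpz : p * z = z * scaleCoeffs q w p) :
    (∃ c : F, p = c • z) ∨ ∃ c : F, scaleCoeffs q w p = c • p := by
  have hdeg := isConstQP_iff_totalDegree_eq_zero.not.mp hnc
  have hp0 := ne_zero_of_not_isConstQP hnc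
  rcases hp z (scaleCoeffs q w p) ⟨z, Or.inl hpz.symm⟩ with hd | hd
  · have hz0 : z ≠ 0 := by rintro rfl; simp [totalDegree] at hz
    obtain ⟨c, hc⟩ := exists_eq_smul_of_eltDvd hq hz0 hd (by omega)
    have hc0 : c ≠ 0 := by rintro rfl; exact hz0 (by simpa using hc)
    exact Or.inl ⟨c⁻¹, by rw [hc, smul_smul, inv_mul_cancel₀ hc0, one_smul]⟩
  · have hsupp := support_coeff_scaleCoeffs hw p
    have hne : scaleCoeffs q w p ≠ 0 := by
      intro h
      rw [h, map_zero, Finsupp.support_zero, eq_comm, Finsupp.support_eq_empty,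
        LinearEquiv.map_eq_zero_iff] at hsupp
      exact hp0 hsupp
    exact Or.inr <| exists_eq_smul_of_eltDvd hq hne hd (by simp only [totalDegree, hsupp, le_rfl])

theorem eq_smul_or_commute_x (hq : q ≠ 0) {p : QPlane F q} (hp : IsPrimeElt p)
    (hnc : ¬ IsConstQP F q p) :
    (∃ c : F, p = c • Qx F q ∨ p = c • Qy F q) ∨ Commute p (Qx F q) := by
  rcases eq_smul_or_scaleCoeffs_eq_smul hq (fun m => pow_ne_zero m.2 hq) totalDegree_x hp hnc
    (mul_x_eq p) with ⟨c, hc⟩ | ⟨c, hc⟩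
  · exact Or.inl ⟨c, Or.inl hc⟩
  by_cases hc1 : c = 1
  · exact Or.inr <| show p * Qx F q = Qx F q * p by rw [mul_x_eq, hc, hc1, one_smul]
  have hpy : p ∈ LinearMap.range (LinearMap.mulRight F (Qy F q)) := by
    refine mem_of_forall_monomial_mem fun m hm => ⟨monomial q (m.1, m.2 - 1), ?_⟩
    have hm2 : m.2 ≠ 0 := fun h0 =>
      hc1 (by simpa [h0] using (eq_of_scaleCoeffs_eq_smul hc hm).symm)
    rw [LinearMap.mulRight_apply, ← monomial_zero_one, monomial_mul_monomial, mul_zero, pow_zero,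
      one_smul]
    congr
    ext <;> simp only [Prod.fst_add, Prod.snd_add] <;> omega
  obtain ⟨g, rfl⟩ := hpy
  obtain ⟨c, hc⟩ := exists_eq_smul_of_isPrimeElt hq hp not_isConstQP_y (Or.inl rfl)
  exact Or.inl ⟨c, Or.inr hc⟩

theorem eq_smul_or_commute_y (hq : q ≠ 0) {p : QPlane F q} (hp : IsPrimeElt p)
    (hnc : ¬ IsConstQP F q p) :
    (∃ c : F, p = c • Qx F q ∨ p = c • Qy F q) ∨ Commute p (Qy F q) := by
  rcases eq_smul_or_scaleCoeffs_eq_smul hq (fun m => inv_ne_zero (pow_ne_zero m.1 hq))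
    totalDegree_y hp hnc (mul_y_eq hq p) with ⟨c, hc⟩ | ⟨c, hc⟩
  · exact Or.inl ⟨c, Or.inr hc⟩
  by_cases hc1 : c = 1
  · exact Or.inr <| show p * Qy F q = Qy F q * p by rw [mul_y_eq hq, hc, hc1, one_smul]
  have hpx : p ∈ LinearMap.range (LinearMap.mulLeft F (Qx F q)) := by
    refine mem_of_forall_monomial_mem fun m hm => ⟨monomial q (m.1 - 1, m.2), ?_⟩
    have hm1 : m.1 ≠ 0 := fun h0 =>
      hc1 (by simpa [h0] using (eq_of_scaleCoeffs_eq_smul hc hm).symm)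
    rw [LinearMap.mulLeft_apply, ← monomial_one_zero, monomial_mul_monomial, zero_mul, pow_zero,
      one_smul]
    congr
    ext <;> simp only [Prod.fst_add, Prod.snd_add] <;> omega
  obtain ⟨g, rfl⟩ := hpx
  obtain ⟨c, hc⟩ := exists_eq_smul_of_isPrimeElt hq hp not_isConstQP_x (Or.inr rfl)
  exact Or.inl ⟨c, Or.inl hc⟩

theorem isCentralElt_of_commute_x_y {p : QPlane F q} (hx : Commute p (Qx F q))
    (hy : Commute p (Qy F q)) : IsCentralElt p := fun f =>
  Algebra.commute_of_mem_adjoin_of_forall_mem_commute (adjoin_x_y (q := q) ▸ Algebra.mem_top)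
    (by rintro _ (rfl | rfl); exacts [hx, hy])

end QuantumPlane

open QuantumPlane

theorem stmt_11_general (F : Type) [Field F] (q : F) (n : ℕ) (hn : 1 ≤ n)
    (hqn : q ^ n = 1)
    (p : QPlane F q) (hnc : ¬ IsConstQP F q p) (hp : IsPrimeElt p) :
    (IsCentralElt p ∧ IsIrreducibleQP F q p) ∨
      ∃ lam : F, p = lam • Qx F q ∨ p = lam • Qy F q := by
  have hq : q ≠ 0 := by
    rintro rfl
    simp [zero_pow (by omega : n ≠ 0)] at hqn
  rcases eq_smul_or_commute_x hq hp hnc with h | hx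
  · exact Or.inr h
  rcases eq_smul_or_commute_y hq hp hnc with h | hy
  · exact Or.inr h
  exact Or.inl ⟨isCentralElt_of_commute_x_y hx hy, hnc, not_isReducibleQP_of_isPrimeElt hq hp⟩

theorem stmt_11 (F : Type) [Field F] [CharZero F] (q : F) (n : ℕ) (hn : 1 ≤ n)
    (hqn : q ^ n = 1) (hprim : ∀ k : ℕ, 0 < k → k < n → q ^ k ≠ 1)
    (p : QPlane F q) (hnc : ¬ IsConstQP F q p) (hp : IsPrimeElt p) :
    (IsCentralElt p ∧ IsIrreducibleQP F q p) ∨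
      ∃ lam : F, p = lam • Qx F q ∨ p = lam • Qy F q :=
  stmt_11_general F q n hn hqn p hnc hp
end
end
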